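/- For any quantum channel T on L(ℂ^d), the diamond norm satisfies ‖Θ ∘ (id − T)‖⋄ ≤ (d/√2)·‖id − T‖⋄, where Θ is the transposition map. Equivalently, since ‖Θ‖⋄ = d, ‖Θ∘(id−T)‖⋄ ≤ (1/√2)‖Θ‖⋄‖id−T‖⋄. -/

import Mathlib

open Matrix Kronecker BigOperators
open scoped ComplexOrder

noncomputable def traceNorm {n : Type*} [Fintype n] [DecidableEq n] (X : Matrix n n ℂ) : ℝ :=
  ((let hA := Matrix.posSemidef_conjTranspose_mul_self X
    (hA.1.eigenvectorUnitary : Matrix n n ℂ) * diagonal (fun i => ((Real.sqrt (hA.1.eigenvalues i) : ℝ) : ℂ)) *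
      (star hA.1.eigenvectorUnitary : Matrix n n ℂ)).trace).re

noncomputable def hsNorm {n : Type*} [Fintype n] (X : Matrix n n ℂ) : ℝ :=
  Real.sqrt ((Xᴴ * X).trace.re)

noncomputable def singularValues {n : Type*} [Fintype n] [DecidableEq n] (Y : Matrix n n ℂ) :
    n → ℝ :=
  fun i => Real.sqrt ((Matrix.posSemidef_conjTranspose_mul_self Y).1.eigenvalues i)

/-- Partial transpose on the first tensor factor. -/
def ptransp {d k : ℕ} (X : Matrix (Fin d × Fin k) (Fin d × Fin k) ℂ) :
    Matrix (Fin d × Fin k) (Fin d × Fin k) ℂ :=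
  fun p q => X (q.1, p.2) (p.1, q.2)

/-- Partial trace over the first tensor factor. -/
noncomputable def ptraceH {d k : ℕ} (X : Matrix (Fin d × Fin k) (Fin d × Fin k) ℂ) :
    Matrix (Fin k) (Fin k) ℂ :=
  fun j j' => ∑ i, X (i, j) (i, j')

def vec {d : ℕ} (A : Matrix (Fin d) (Fin d) ℂ) : Fin d × Fin d → ℂ := fun p => A p.1 p.2

/-- Outer product |v⟩⟨w|. -/
def outer {n : Type*} (v w : n → ℂ) : Matrix n n ℂ := fun i j => v i * star (w j)

/-- The swap operator F(e_i ⊗ e_j) = e_j ⊗ e_i. -/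
def swapOp (d : ℕ) : Matrix (Fin d × Fin d) (Fin d × Fin d) ℂ :=
  fun p q => if p.1 = q.2 ∧ p.2 = q.1 then 1 else 0

/-- Blockwise action of Φ ⊗ id on operators on H ⊗ K. -/
def tensorExt {d k : ℕ} (Φ : Matrix (Fin d) (Fin d) ℂ → Matrix (Fin d) (Fin d) ℂ)
    (Z : Matrix (Fin d × Fin k) (Fin d × Fin k) ℂ) :
    Matrix (Fin d × Fin k) (Fin d × Fin k) ℂ :=
  fun p q => Φ (fun a b => Z (a, p.2) (b, q.2)) p.1 q.1

/-- Diamond norm (stabilized at ancilla dimension d). -/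
noncomputable def diamondNorm {d : ℕ}
    (Φ : Matrix (Fin d) (Fin d) ℂ → Matrix (Fin d) (Fin d) ℂ) : ℝ :=
  ⨆ ρ : {ρ : Matrix (Fin d × Fin d) (Fin d × Fin d) ℂ // ρ.PosSemidef ∧ ρ.trace = 1},
    traceNorm (tensorExt Φ ρ.1)

/-! For a state ρ, the operator `X = ((id - T) ⊗ id) ρ = ρ - (T ⊗ id) ρ` is Hermitian and
traceless, and `(Θ ⊗ id) X` is its partial transpose. On `ℂ^d ⊗ ℂ^d` Cauchy–Schwarz on the
singular values gives `‖Y‖₁ ≤ d ‖Y‖₂`; the partial transpose only permutes matrix entries, so it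
preserves `‖·‖₂`; and a traceless Hermitian `X` has `‖X‖₂ ≤ ‖X‖₁ / √2`, because its eigenvalues
sum to zero, so each one is at most half of their absolute sum in modulus. Chaining these,
`‖(Θ ⊗ id) X‖₁ ≤ (d / √2) ‖X‖₁`. The second form follows from `‖Θ‖⋄ ≥ d`: the partial transpose of
the maximally entangled state is the swap operator divided by `d`, whose trace norm is `d`. -/

open scoped MatrixOrder

namespace Matrix.IsHermitian
variable {𝕜 n : Type*} [RCLike 𝕜] [Fintype n] [DecidableEq n] {A : Matrix n n 𝕜}

theorem trace_cfc (hA : A.IsHermitian) (f : ℝ → ℝ) :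
    (cfc f A).trace = ∑ i, (f (hA.eigenvalues i) : 𝕜) := by
  rw [hA.cfc_eq, IsHermitian.cfc, Unitary.conjStarAlgAut_apply, trace_mul_cycle,
    Unitary.coe_star_mul_self, one_mul, trace_diagonal]
  rfl

end Matrix.IsHermitian

theorem Finset.sum_sq_le_sq_sum_abs_div_two {ι : Type*} (s : Finset ι) (f : ι → ℝ)
    (h0 : ∑ i ∈ s, f i = 0) : ∑ i ∈ s, f i ^ 2 ≤ (∑ i ∈ s, |f i|) ^ 2 / 2 := by
  classical
  set S := ∑ i ∈ s, |f i|
  have h_half : ∀ i ∈ s, |f i| ≤ S / 2 := by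
    intro i hi
    have h_rest : |f i| ≤ ∑ j ∈ s.erase i, |f j| := by
      rw [← Finset.add_sum_erase s f hi, add_eq_zero_iff_eq_neg] at h0
      rw [h0, abs_neg]
      exact Finset.abs_sum_le_sum_abs _ _
    linarith [Finset.add_sum_erase s (fun j => |f j|) hi]
  calc ∑ i ∈ s, f i ^ 2 = ∑ i ∈ s, |f i| * |f i| := by simp only [← sq, sq_abs]
    _ ≤ ∑ i ∈ s, S / 2 * |f i| :=
        Finset.sum_le_sum fun i hi => mul_le_mul_of_nonneg_right (h_half i hi) (abs_nonneg _)
    _ = S ^ 2 / 2 := by rw [← Finset.mul_sum]; ring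

section HilbertSchmidt
variable {n : Type*} [Fintype n]

theorem hsNorm_nonneg (X : Matrix n n ℂ) : 0 ≤ hsNorm X := Real.sqrt_nonneg _

theorem re_trace_conjTranspose_mul_self (X : Matrix n n ℂ) :
    (Xᴴ * X).trace.re = ∑ p : n × n, ‖X p.1 p.2‖ ^ 2 := by
  simp only [trace, diag_apply, mul_apply, conjTranspose_apply, Complex.re_sum,
    Fintype.sum_prod_type]
  rw [Finset.sum_comm]
  refine Finset.sum_congr rfl fun i _ => Finset.sum_congr rfl fun j _ => ?_
  rw [mul_comm, Complex.star_def, Complex.mul_conj, Complex.normSq_eq_norm_sq, Complex.ofReal_re]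

theorem hsNorm_sq (X : Matrix n n ℂ) : hsNorm X ^ 2 = (Xᴴ * X).trace.re :=
  Real.sq_sqrt (re_trace_conjTranspose_mul_self X ▸ by positivity)

theorem hsNorm_eq_norm_toLp (X : Matrix n n ℂ) :
    hsNorm X = ‖(WithLp.toLp 2 (fun p : n × n => X p.1 p.2) : EuclideanSpace ℂ (n × n))‖ := by
  rw [hsNorm, re_trace_conjTranspose_mul_self, EuclideanSpace.norm_eq]

theorem hsNorm_sub_le (X Y : Matrix n n ℂ) : hsNorm (X - Y) ≤ hsNorm X + hsNorm Y := by
  have h_entries :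
      (fun p : n × n => (X - Y) p.1 p.2) = (fun p => X p.1 p.2) - fun p => Y p.1 p.2 := rfl
  rw [hsNorm_eq_norm_toLp, hsNorm_eq_norm_toLp, hsNorm_eq_norm_toLp, h_entries, WithLp.toLp_sub]
  exact norm_sub_le _ _

theorem hsNorm_ptransp {d k : ℕ} (X : Matrix (Fin d × Fin k) (Fin d × Fin k) ℂ) :
    hsNorm (ptransp X) = hsNorm X := by
  rw [hsNorm, hsNorm, re_trace_conjTranspose_mul_self, re_trace_conjTranspose_mul_self]
  congr 1
  exact Fintype.sum_bijective
    (fun r : (Fin d × Fin k) × (Fin d × Fin k) => ((r.2.1, r.1.2), (r.1.1, r.2.2)))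
    (Function.Involutive.bijective fun r => rfl) _ _ fun r => rfl

end HilbertSchmidt

section TraceNorm
variable {n : Type*} [Fintype n] [DecidableEq n]

theorem traceNorm_eq_re_trace_cfc_sqrt (X : Matrix n n ℂ) :
    traceNorm X = (cfc Real.sqrt (Xᴴ * X)).trace.re := by
  rw [(posSemidef_conjTranspose_mul_self X).1.cfc_eq]
  rfl

theorem traceNorm_eq_re_trace_abs (X : Matrix n n ℂ) : traceNorm X = (CFC.abs X).trace.re := by
  rw [traceNorm_eq_re_trace_cfc_sqrt, CFC.abs, CFC.sqrt_eq_real_sqrt (star X * X)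
    (posSemidef_conjTranspose_mul_self X).nonneg, cfcₙ_eq_cfc]
  rfl

theorem traceNorm_eq_sum_singularValues (X : Matrix n n ℂ) :
    traceNorm X = ∑ i, singularValues X i := by
  rw [traceNorm_eq_re_trace_cfc_sqrt, (posSemidef_conjTranspose_mul_self X).1.trace_cfc]
  simp [singularValues, Complex.re_sum]

theorem hsNorm_sq_eq_sum_singularValues_sq (X : Matrix n n ℂ) :
    hsNorm X ^ 2 = ∑ i, singularValues X i ^ 2 := by
  have hA := posSemidef_conjTranspose_mul_self X
  rw [hsNorm_sq, hA.1.trace_eq_sum_eigenvalues]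
  simp [singularValues, Complex.re_sum, Real.sq_sqrt (hA.eigenvalues_nonneg _)]

theorem traceNorm_nonneg (X : Matrix n n ℂ) : 0 ≤ traceNorm X := by
  rw [traceNorm_eq_sum_singularValues]
  exact Finset.sum_nonneg fun i _ => Real.sqrt_nonneg _

theorem traceNorm_le_sqrt_card_mul_hsNorm (X : Matrix n n ℂ) :
    traceNorm X ≤ √(Fintype.card n) * hsNorm X := by
  have h := sq_sum_le_card_mul_sum_sq (s := Finset.univ) (f := singularValues X)
  rw [← hsNorm_sq_eq_sum_singularValues_sq, Finset.card_univ] at h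
  calc traceNorm X ≤ √(Fintype.card n * hsNorm X ^ 2) := by
        rw [traceNorm_eq_sum_singularValues]; exact Real.le_sqrt_of_sq_le h
    _ = √(Fintype.card n) * hsNorm X := by
        rw [Real.sqrt_mul (Nat.cast_nonneg _), Real.sqrt_sq (hsNorm_nonneg X)]

theorem traceNorm_smul_of_mem_unitary (c : ℂ) {U : Matrix n n ℂ}
    (hU : U ∈ unitary (Matrix n n ℂ)) :
    traceNorm (c • U) = ‖c‖ * Fintype.card n := by
  rw [traceNorm_eq_re_trace_abs, CFC.abs_smul, CFC.abs_of_mem_unitary hU]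
  simp

namespace Matrix.IsHermitian
variable {X : Matrix n n ℂ}

theorem traceNorm_eq_sum_abs_eigenvalues (hX : X.IsHermitian) :
    traceNorm X = ∑ i, |hX.eigenvalues i| := by
  rw [traceNorm_eq_re_trace_abs, CFC.abs_eq_cfc_norm X hX.isSelfAdjoint, hX.trace_cfc]
  simp [Complex.re_sum]

theorem hsNorm_sq_eq_sum_eigenvalues_sq (hX : X.IsHermitian) :
    hsNorm X ^ 2 = ∑ i, hX.eigenvalues i ^ 2 := by
  rw [hsNorm_sq, hX.eq, ← sq, ← cfc_pow_id (R := ℝ) X 2 hX.isSelfAdjoint, hX.trace_cfc]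
  simp only [Complex.re_sum]
  norm_cast

theorem hsNorm_le_traceNorm_div_sqrt_two (hX : X.IsHermitian) (h0 : X.trace = 0) :
    hsNorm X ≤ traceNorm X / √2 := by
  have h_sum : ∑ i, hX.eigenvalues i = 0 := by
    simpa [hX.trace_eq_sum_eigenvalues, ← Complex.ofReal_sum] using h0
  have h := Finset.sum_sq_le_sq_sum_abs_div_two _ _ h_sum
  rw [← hX.hsNorm_sq_eq_sum_eigenvalues_sq, ← hX.traceNorm_eq_sum_abs_eigenvalues] at h
  rw [le_div_iff₀ (by positivity)]
  refine le_of_pow_le_pow_left₀ two_ne_zero (traceNorm_nonneg X) ?_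
  rw [mul_pow, Real.sq_sqrt zero_le_two]
  linarith

end Matrix.IsHermitian

theorem Matrix.PosSemidef.hsNorm_le_re_trace {P : Matrix n n ℂ} (hP : P.PosSemidef) :
    hsNorm P ≤ P.trace.re := by
  have h_nonneg : ∀ i ∈ Finset.univ, 0 ≤ hP.1.eigenvalues i := fun i _ => hP.eigenvalues_nonneg i
  have h := Finset.sum_sq_le_sq_sum_of_nonneg h_nonneg
  have h_trace : P.trace.re = ∑ i, hP.1.eigenvalues i := by
    simp [hP.1.trace_eq_sum_eigenvalues, Complex.re_sum]
  rw [← hP.1.hsNorm_sq_eq_sum_eigenvalues_sq, ← h_trace] at h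
  exact le_of_pow_le_pow_left₀ two_ne_zero (h_trace ▸ Finset.sum_nonneg h_nonneg) h

end TraceNorm

section TensorExt
variable {d k : ℕ}

theorem tensorExt_id_sub (Φ : Matrix (Fin d) (Fin d) ℂ → Matrix (Fin d) (Fin d) ℂ)
    (Z : Matrix (Fin d × Fin k) (Fin d × Fin k) ℂ) :
    tensorExt (fun X => X - Φ X) Z = Z - tensorExt Φ Z :=
  rfl

theorem tensorExt_id (Z : Matrix (Fin d × Fin k) (Fin d × Fin k) ℂ) :
    tensorExt (fun X => X) Z = Z :=
  rfl

theorem tensorExt_transpose (Φ : Matrix (Fin d) (Fin d) ℂ → Matrix (Fin d) (Fin d) ℂ)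
    (Z : Matrix (Fin d × Fin k) (Fin d × Fin k) ℂ) :
    tensorExt (fun X => (Φ X)ᵀ) Z = ptransp (tensorExt Φ Z) :=
  rfl

variable {ι : Type*} [Fintype ι] {E : ι → Matrix (Fin d) (Fin d) ℂ}
  {T : Matrix (Fin d) (Fin d) ℂ → Matrix (Fin d) (Fin d) ℂ}

theorem tensorExt_eq_sum_kronecker (hT : ∀ X, T X = ∑ i, E i * X * (E i)ᴴ)
    (Z : Matrix (Fin d × Fin k) (Fin d × Fin k) ℂ) :
    tensorExt T Z = ∑ i, (E i ⊗ₖ (1 : Matrix (Fin k) (Fin k) ℂ)) * Z * (E i ⊗ₖ 1)ᴴ := by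
  ext p q
  change T (Matrix.of fun a b => Z (a, p.2) (b, q.2)) p.1 q.1 = _
  rw [hT]
  simp [Matrix.sum_apply, mul_apply, one_apply, Fintype.sum_prod_type, Finset.sum_mul,
    apply_ite (starRingEnd ℂ), mul_ite]

theorem posSemidef_tensorExt_of_kraus (hT : ∀ X, T X = ∑ i, E i * X * (E i)ᴴ)
    {Z : Matrix (Fin d × Fin k) (Fin d × Fin k) ℂ} (hZ : Z.PosSemidef) :
    (tensorExt T Z).PosSemidef := by
  rw [tensorExt_eq_sum_kronecker hT]
  exact posSemidef_sum _ fun i _ => hZ.mul_mul_conjTranspose_same _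

theorem trace_tensorExt_of_kraus (hE : ∑ i, (E i)ᴴ * E i = 1)
    (hT : ∀ X, T X = ∑ i, E i * X * (E i)ᴴ) (Z : Matrix (Fin d × Fin k) (Fin d × Fin k) ℂ) :
    (tensorExt T Z).trace = Z.trace := by
  have h_sum : ∑ i, (E i ⊗ₖ (1 : Matrix (Fin k) (Fin k) ℂ))ᴴ * (E i ⊗ₖ 1) = 1 := by
    simp_rw [conjTranspose_kronecker, ← mul_kronecker_mul, conjTranspose_one, mul_one]
    rw [← one_kronecker_one, ← hE]
    ext p q
    simp [Matrix.sum_apply, Finset.sum_mul]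
  rw [tensorExt_eq_sum_kronecker hT, trace_sum]
  simp_rw [trace_mul_cycle _ Z]
  rw [← trace_sum, ← Finset.sum_mul, h_sum, one_mul]

end TensorExt

theorem traceNorm_ptransp_le_sqrt_mul_hsNorm {d k : ℕ}
    (Z : Matrix (Fin d × Fin k) (Fin d × Fin k) ℂ) :
    traceNorm (ptransp Z) ≤ √(d * k) * hsNorm Z := by
  simpa [hsNorm_ptransp] using traceNorm_le_sqrt_card_mul_hsNorm (ptransp Z)

theorem traceNorm_ptransp_le_of_isHermitian {d k : ℕ}
    {X : Matrix (Fin d × Fin k) (Fin d × Fin k) ℂ} (hX : X.IsHermitian) (h0 : X.trace = 0) :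
    traceNorm (ptransp X) ≤ √(d * k) / √2 * traceNorm X :=
  calc traceNorm (ptransp X) ≤ √(d * k) * hsNorm X := traceNorm_ptransp_le_sqrt_mul_hsNorm X
    _ ≤ √(d * k) * (traceNorm X / √2) := by gcongr; exact hX.hsNorm_le_traceNorm_div_sqrt_two h0
    _ = √(d * k) / √2 * traceNorm X := by ring

theorem traceNorm_sub_le_of_density {n : Type*} [Fintype n] [DecidableEq n]
    {ρ σ : Matrix n n ℂ} (hρ : ρ.PosSemidef) (hρ1 : ρ.trace = 1)
    (hσ : σ.PosSemidef) (hσ1 : σ.trace = 1) :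
    traceNorm (ρ - σ) ≤ √(Fintype.card n) * 2 := by
  have h := (hsNorm_sub_le ρ σ).trans (add_le_add hρ.hsNorm_le_re_trace hσ.hsNorm_le_re_trace)
  rw [hρ1, hσ1, Complex.one_re, one_add_one_eq_two] at h
  exact (traceNorm_le_sqrt_card_mul_hsNorm _).trans (by gcongr)

section DiamondNorm
variable {d : ℕ}

theorem diamondNorm_nonneg (Φ : Matrix (Fin d) (Fin d) ℂ → Matrix (Fin d) (Fin d) ℂ) :
    0 ≤ diamondNorm Φ :=
  Real.iSup_nonneg fun _ => traceNorm_nonneg _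

-- The bound `C` is needed because `⨆` of an unbounded family of reals is `0`.
theorem traceNorm_tensorExt_le_diamondNorm
    {Φ : Matrix (Fin d) (Fin d) ℂ → Matrix (Fin d) (Fin d) ℂ} {C : ℝ}
    (hC : ∀ ρ : Matrix (Fin d × Fin d) (Fin d × Fin d) ℂ, ρ.PosSemidef → ρ.trace = 1 →
      traceNorm (tensorExt Φ ρ) ≤ C)
    {ρ : Matrix (Fin d × Fin d) (Fin d × Fin d) ℂ} (hρ : ρ.PosSemidef) (hρ1 : ρ.trace = 1) :
    traceNorm (tensorExt Φ ρ) ≤ diamondNorm Φ :=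
  le_ciSup (f := fun ρ : {ρ : Matrix (Fin d × Fin d) (Fin d × Fin d) ℂ //
      ρ.PosSemidef ∧ ρ.trace = 1} => traceNorm (tensorExt Φ ρ.1))
    ⟨C, Set.forall_mem_range.2 fun ρ => hC ρ.1 ρ.2.1 ρ.2.2⟩ ⟨ρ, hρ, hρ1⟩

theorem diamondNorm_transpose_comp_le
    {Φ : Matrix (Fin d) (Fin d) ℂ → Matrix (Fin d) (Fin d) ℂ} {C : ℝ}
    (hΦ : ∀ ρ : Matrix (Fin d × Fin d) (Fin d × Fin d) ℂ, ρ.PosSemidef → ρ.trace = 1 →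
      (tensorExt Φ ρ).IsHermitian ∧ (tensorExt Φ ρ).trace = 0)
    (hC : ∀ ρ : Matrix (Fin d × Fin d) (Fin d × Fin d) ℂ, ρ.PosSemidef → ρ.trace = 1 →
      traceNorm (tensorExt Φ ρ) ≤ C) :
    diamondNorm (fun X => (Φ X)ᵀ) ≤ d / √2 * diamondNorm Φ := by
  refine Real.iSup_le (fun ρ => ?_) (mul_nonneg (by positivity) (diamondNorm_nonneg Φ))
  obtain ⟨ρ, hρ, hρ1⟩ := ρ
  obtain ⟨hX, h0⟩ := hΦ ρ hρ hρ1
  rw [tensorExt_transpose]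
  calc traceNorm (ptransp (tensorExt Φ ρ))
      ≤ √(d * d) / √2 * traceNorm (tensorExt Φ ρ) := traceNorm_ptransp_le_of_isHermitian hX h0
    _ ≤ d / √2 * diamondNorm Φ := by
        rw [Real.sqrt_mul_self (Nat.cast_nonneg d)]
        gcongr
        exact traceNorm_tensorExt_le_diamondNorm hC hρ hρ1

end DiamondNorm

section MaxEntangled
variable {d : ℕ}

noncomputable def maxEntangled (d : ℕ) : Matrix (Fin d × Fin d) (Fin d × Fin d) ℂ :=
  (d : ℂ)⁻¹ • outer (_root_.vec 1) (_root_.vec 1)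

theorem maxEntangled_posSemidef : (maxEntangled d).PosSemidef :=
  (posSemidef_vecMulVec_self_star (_root_.vec 1)).smul (by simp)

theorem trace_maxEntangled (hd : d ≠ 0) : (maxEntangled d).trace = 1 := by
  simp [maxEntangled, trace, outer, _root_.vec, one_apply, Fintype.sum_prod_type, hd]

theorem ptransp_maxEntangled : ptransp (maxEntangled d) = (d : ℂ)⁻¹ • swapOp d := by
  ext p q
  simp only [maxEntangled, ptransp, swapOp, Matrix.smul_apply, outer, _root_.vec, one_apply]
  split_ifs <;> simp_all [eq_comm]

theorem swapOp_mem_unitary : swapOp d ∈ unitary (Matrix (Fin d × Fin d) (Fin d × Fin d) ℂ) := by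
  have h_herm : star (swapOp d) = swapOp d := by
    ext p q
    simp only [star_apply, swapOp]
    split_ifs <;> simp_all [eq_comm]
  refine Matrix.mem_unitaryGroup_iff.2 ?_
  rw [h_herm]
  ext p q
  simp [mul_apply, swapOp, one_apply, Fintype.sum_prod_type, ite_and, Prod.ext_iff]

theorem traceNorm_ptransp_maxEntangled : traceNorm (ptransp (maxEntangled d)) = d := by
  rw [ptransp_maxEntangled, traceNorm_smul_of_mem_unitary _ swapOp_mem_unitary]
  rcases eq_or_ne d 0 with rfl | hd
  · simp
  · simp [Fintype.card_prod]; field_simp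

theorem natCast_le_diamondNorm_transpose :
    (d : ℝ) ≤ diamondNorm (fun X : Matrix (Fin d) (Fin d) ℂ => Xᵀ) := by
  rcases eq_or_ne d 0 with rfl | hd
  · simpa using diamondNorm_nonneg _
  have h_bdd : ∀ ρ : Matrix (Fin d × Fin d) (Fin d × Fin d) ℂ, ρ.PosSemidef → ρ.trace = 1 →
      traceNorm (tensorExt (fun X : Matrix (Fin d) (Fin d) ℂ => Xᵀ) ρ) ≤ d := by
    intro ρ hρ hρ1
    have h := hρ.hsNorm_le_re_trace
    rw [hρ1, Complex.one_re] at h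
    calc traceNorm (ptransp ρ) ≤ √(d * d) * hsNorm ρ := traceNorm_ptransp_le_sqrt_mul_hsNorm ρ
      _ ≤ d := by
          rw [Real.sqrt_mul_self (Nat.cast_nonneg d)]
          exact mul_le_of_le_one_right (Nat.cast_nonneg d) h
  have h :=
    traceNorm_tensorExt_le_diamondNorm h_bdd maxEntangled_posSemidef (trace_maxEntangled hd)
  rwa [tensorExt_transpose, tensorExt_id, traceNorm_ptransp_maxEntangled] at h

end MaxEntangled

theorem diamond_norm_submultiplicativity {d m : ℕ}
    (E : Fin m → Matrix (Fin d) (Fin d) ℂ) (hE : ∑ i, (E i)ᴴ * E i = 1)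
    (T : Matrix (Fin d) (Fin d) ℂ → Matrix (Fin d) (Fin d) ℂ)
    (hT : ∀ X, T X = ∑ i, E i * X * (E i)ᴴ) :
    diamondNorm (fun X => (X - T X)ᵀ) ≤
      (d / Real.sqrt 2) * diamondNorm (fun X => X - T X) ∧
    diamondNorm (fun X => (X - T X)ᵀ) ≤
      (1 / Real.sqrt 2) * diamondNorm (fun X : Matrix (Fin d) (Fin d) ℂ => Xᵀ) *
        diamondNorm (fun X => X - T X) := by
  have h_channel : ∀ ρ : Matrix (Fin d × Fin d) (Fin d × Fin d) ℂ, ρ.PosSemidef → ρ.trace = 1 →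
      (tensorExt T ρ).PosSemidef ∧ (tensorExt T ρ).trace = 1 := fun ρ hρ hρ1 =>
    ⟨posSemidef_tensorExt_of_kraus hT hρ, (trace_tensorExt_of_kraus hE hT ρ).trans hρ1⟩
  have h_first : diamondNorm (fun X => (X - T X)ᵀ) ≤ d / √2 * diamondNorm (fun X => X - T X) := by
    refine diamondNorm_transpose_comp_le (C := √(Fintype.card (Fin d × Fin d)) * 2)
      (fun ρ hρ hρ1 => ?_) (fun ρ hρ hρ1 => ?_)
    · obtain ⟨hσ, hσ1⟩ := h_channel ρ hρ hρ1
      rw [tensorExt_id_sub, trace_sub, hρ1, hσ1, sub_self]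
      exact ⟨hρ.1.sub hσ.1, rfl⟩
    · obtain ⟨hσ, hσ1⟩ := h_channel ρ hρ hρ1
      rw [tensorExt_id_sub]
      exact traceNorm_sub_le_of_density hρ hρ1 hσ hσ1
  refine ⟨h_first, h_first.trans ?_⟩
  calc d / √2 * diamondNorm (fun X => X - T X)
      = 1 / √2 * d * diamondNorm (fun X => X - T X) := by ring
    _ ≤ 1 / √2 * diamondNorm (fun X : Matrix (Fin d) (Fin d) ℂ => Xᵀ) *
        diamondNorm (fun X => X - T X) := by
      gcongr
      exacts [diamondNorm_nonneg _, natCast_le_diamondNorm_transpose]
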